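/- Let K be a field, let M be a d×n matrix over K of rank d, and let σ be a permutation of {1,…,n}. Let ≺_σ be the total order on {1,…,n} defined by σ(1) ≺_σ σ(2) ≺_σ ⋯ ≺_σ σ(n), and let B(σ) be the least d-element subset of {1,…,n}, in the lexicographic order on d-element subsets induced by ≺_σ (comparing the ≺_σ-increasing lists of elements position by position), whose columns in M are linearly independent. Let C_σ ⊆ ℝⁿ be the convex cone generated by all vectors eᵢ − eⱼ with i ≻_σ j. Then P_M + C_σ = e_{B(σ)} + C_σ, where P_M is the rank polytope of M and e_{B(σ)} = ∑_{i∈B(σ)} eᵢ. -/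

import Mathlib

/-!
Relabel the columns along `σ`, so that `≺_σ` becomes the usual order on `Fin n`. Every column
outside the lexicographically first basis `A` is spanned by the columns of `A` that precede it:
otherwise those columns together with it would extend to a basis preceding `A`. Hence for every
threshold `t`, the columns of any other basis `A'` preceding `t` are spanned by the columns of `A`
preceding `t`, so `A` has at least as many elements below `t` as `A'`; equivalently, the `k`-th
element of `A` precedes the `k`-th element of `A'` for every `k`. Pairing them writes
`e_{A'} - e_A` as a sum of generators `e_i - e_j` of `C_σ`, so every vertex of `P_M` lies in the
convex set `e_A + C_σ`, and `C_σ + C_σ = C_σ` finishes the proof.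
-/

open Pointwise

noncomputable section

def eVec (n : ℕ) (i : Fin n) : Fin n → ℝ := Pi.single i 1

/-- The `≺_σ`-increasing lists are compared position by position, which amounts to comparing
the `<`-sorted lists of the `σ⁻¹`-images lexicographically. -/
def lexLtPerm {n : ℕ} (σ : Equiv.Perm (Fin n)) (A B : Finset (Fin n)) : Prop :=
  List.Lex (· < ·) ((A.image σ.symm).sort (· ≤ ·)) ((B.image σ.symm).sort (· ≤ ·))

def coneOfPerm {n : ℕ} (σ : Equiv.Perm (Fin n)) : Set (Fin n → ℝ) :=
  {x | ∃ c : Fin n × Fin n → ℝ, (∀ p, 0 ≤ c p) ∧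
    x = ∑ p ∈ Finset.univ.filter (fun p : Fin n × Fin n => σ.symm p.2 < σ.symm p.1),
      c p • (eVec n p.1 - eVec n p.2)}

def rankPolytope {K : Type*} [Field K] {d n : ℕ} (M : Matrix (Fin d) (Fin n) K) :
    Set (Fin n → ℝ) :=
  convexHull ℝ {x | ∃ B : Finset (Fin n), B.card = d ∧
    LinearIndependent K (fun i : B => M.transpose (i : Fin n)) ∧
    x = ∑ i ∈ B, eVec n i}

open Finset Module Submodule

theorem List.Lex.exists_mem_notMem_of_pairwise {α : Type*} [LinearOrder α] {l₁ l₂ : List α}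
    (h : List.Lex (· < ·) l₁ l₂) (h₁ : l₁.Pairwise (· < ·)) (h₂ : l₂.Pairwise (· < ·))
    (hlen : l₁.length = l₂.length) :
    ∃ z ∈ l₁, z ∉ l₂ ∧ ∀ y < z, (y ∈ l₁ ↔ y ∈ l₂) := by
  induction h with
  | nil => simp at hlen
  | rel hab =>
    simp only [List.pairwise_cons] at h₁ h₂
    exact ⟨_, List.mem_cons_self, by grind, fun y hy => by grind⟩
  | cons _ ih =>
    simp only [List.pairwise_cons] at h₁ h₂
    obtain ⟨z, hz₁, hz₂, hbelow⟩ := ih h₁.2 h₂.2 (by simpa using hlen)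
    exact ⟨z, List.mem_cons_of_mem _ hz₁, by grind, fun y hy => by grind⟩

theorem Finset.exists_mem_notMem_of_lex_sort {α : Type*} [LinearOrder α] {s t : Finset α}
    (hst : s.card = t.card) (h : List.Lex (· < ·) (s.sort (· ≤ ·)) (t.sort (· ≤ ·))) :
    ∃ z ∈ s, z ∉ t ∧ ∀ y < z, (y ∈ s ↔ y ∈ t) := by
  simpa using h.exists_mem_notMem_of_pairwise s.sortedLT_sort.pairwise
    t.sortedLT_sort.pairwise (by simpa using hst)

theorem Finset.orderEmbOfFin_le_of_card_filter_lt_le {α : Type*} [LinearOrder α]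
    {s t : Finset α} {d : ℕ} (hs : s.card = d) (ht : t.card = d)
    (h : ∀ x, #{a ∈ t | a < x} ≤ #{a ∈ s | a < x}) (k : Fin d) :
    s.orderEmbOfFin hs k ≤ t.orderEmbOfFin ht k := by
  by_contra! hlt
  have hs_below : #{a ∈ s | a < s.orderEmbOfFin hs k} ≤ k := by
    calc _ ≤ #((Iio k).map (s.orderEmbOfFin hs).toEmbedding) := card_le_card fun a ha => by
          obtain ⟨ha, hak⟩ := mem_filter.1 ha
          obtain ⟨j, rfl⟩ := (s.range_orderEmbOfFin hs).symm ▸ (mem_coe.2 ha)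
          simpa using hak
      _ = k := by simp
  have ht_below : k + 1 ≤ #{a ∈ t | a < s.orderEmbOfFin hs k} := by
    calc k + 1 = #((Iic k).map (t.orderEmbOfFin ht).toEmbedding) := by simp
      _ ≤ _ := card_le_card fun a ha => by
          obtain ⟨j, hj, rfl⟩ := mem_map.1 ha
          exact mem_filter.2 ⟨t.orderEmbOfFin_mem ht j,
            ((t.orderEmbOfFin ht).monotone (mem_Iic.1 hj)).trans_lt hlt⟩
  have := h (s.orderEmbOfFin hs k)
  omega

section LinearAlgebra

variable {α K V : Type*} [Field K] [AddCommGroup V] [Module K V] {v : α → V}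

theorem LinearIndepOn.finrank_span_image_finset {s : Finset α} (hs : LinearIndepOn K v s) :
    finrank K (span K (v '' s)) = #s := by
  rw [Set.image_eq_range]
  simpa using finrank_span_eq_card hs

theorem LinearIndepOn.card_le_of_image_subset_span {s t : Finset α} (hs : LinearIndepOn K v s)
    (hst : v '' s ⊆ span K (v '' t)) : #s ≤ #t := by
  classical
  have := FiniteDimensional.span_of_finite K (t.finite_toSet.image v)
  calc #s = finrank K (span K (v '' s)) := hs.finrank_span_image_finset.symm
    _ ≤ finrank K (span K (v '' t)) := Submodule.finrank_mono (span_le.2 hst)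
    _ ≤ #(t.image v) := by rw [← coe_image]; exact finrank_span_finset_le_card _
    _ ≤ #t := card_image_le

theorem LinearIndepOn.span_image_eq_top [FiniteDimensional K V] {s : Finset α}
    (hs : LinearIndepOn K v s) (hcard : #s = finrank K V) : span K (v '' s) = ⊤ :=
  eq_top_of_finrank_eq (hs.finrank_span_image_finset.trans hcard)

theorem LinearIndepOn.exists_finset_extension {s t : Finset α} (hs : LinearIndepOn K v s)
    (hst : s ⊆ t) (ht : span K (v '' t) = ⊤) :
    ∃ b : Finset α, s ⊆ b ∧ b ⊆ t ∧ LinearIndepOn K v b ∧ #b = finrank K V := by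
  obtain ⟨b, hbt, hsb, htb, hb⟩ := exists_linearIndepOn_extension hs (coe_subset.2 hst)
  obtain ⟨b, rfl⟩ := (t.finite_toSet.subset hbt).exists_finset_coe
  have hspan : span K (v '' b) = ⊤ := top_unique (ht ▸ span_le.2 htb)
  refine ⟨b, coe_subset.1 hsb, coe_subset.1 hbt, hb, ?_⟩
  rw [← hb.finrank_span_image_finset, hspan, finrank_top]

end LinearAlgebra

section Gale

variable {α K V : Type*} [LinearOrder α] [Field K] [AddCommGroup V] [Module K V]

variable (K) in
/-- `A` is the lexicographically first basis: sets are compared by the least element of their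
symmetric difference. -/
structure IsLexMinBasis (v : α → V) (A : Finset α) : Prop where
  linearIndepOn : LinearIndepOn K v A
  card_eq : #A = finrank K V
  exists_mem_notMem : ∀ T : Finset α, LinearIndepOn K v T → #T = finrank K V → T ≠ A →
    ∃ z ∈ A, z ∉ T ∧ ∀ y < z, (y ∈ A ↔ y ∈ T)

variable [FiniteDimensional K V] {v : α → V} {A : Finset α}

theorem IsLexMinBasis.mem_span_image_filter_lt (hA : IsLexMinBasis K v A) {x : α} (hx : x ∉ A) :
    v x ∈ span K (v '' ({a ∈ A | a < x} : Finset α)) := by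
  by_contra hspan
  have hS : LinearIndepOn K v (insert x {a ∈ A | a < x} : Finset α) := by
    rw [coe_insert]
    exact (hA.linearIndepOn.mono (coe_subset.2 (filter_subset _ _))).insert hspan
  have hspan_top : span K (v '' (insert x A : Finset α)) = ⊤ :=
    top_unique <| hA.linearIndepOn.span_image_eq_top hA.card_eq ▸
      span_mono (Set.image_mono (by simp))
  obtain ⟨T, hST, -, hT, hTcard⟩ :=
    hS.exists_finset_extension (insert_subset_insert _ (filter_subset _ _)) hspan_top
  have hxT : x ∈ T := hST (mem_insert_self _ _)
  obtain ⟨z, hzA, hzT, hbelow⟩ :=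
    hA.exists_mem_notMem T hT hTcard (by rintro rfl; exact hx hxT)
  rcases lt_trichotomy z x with hzx | rfl | hxz
  · exact hzT (hST (by simp [hzA, hzx]))
  · exact hx hzA
  · exact hx ((hbelow x hxz).2 hxT)

theorem IsLexMinBasis.card_filter_lt_le (hA : IsLexMinBasis K v A) {A' : Finset α}
    (hA' : LinearIndepOn K v A') (t : α) : #{a ∈ A' | a < t} ≤ #{a ∈ A | a < t} := by
  refine (hA'.mono (coe_subset.2 (filter_subset _ _))).card_le_of_image_subset_span ?_
  rintro _ ⟨x, hx, rfl⟩
  obtain ⟨-, hxt⟩ := mem_filter.1 hx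
  by_cases hxA : x ∈ A
  · exact subset_span ⟨x, by simp [hxA, hxt], rfl⟩
  · refine span_mono (Set.image_mono ?_) (hA.mem_span_image_filter_lt hxA)
    intro a
    simp only [coe_filter, Set.mem_ofPred_eq]
    exact fun ⟨haA, hax⟩ => ⟨haA, hax.trans hxt⟩

theorem IsLexMinBasis.orderEmbOfFin_le (hA : IsLexMinBasis K v A) {A' : Finset α}
    (hA' : LinearIndepOn K v A') (hA'card : #A' = finrank K V) (k : Fin (finrank K V)) :
    A.orderEmbOfFin hA.card_eq k ≤ A'.orderEmbOfFin hA'card k :=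
  orderEmbOfFin_le_of_card_filter_lt_le _ _ (hA.card_filter_lt_le hA') k

end Gale

section Cone

variable {n : ℕ} {σ : Equiv.Perm (Fin n)}

theorem add_mem_coneOfPerm {x y : Fin n → ℝ} (hx : x ∈ coneOfPerm σ) (hy : y ∈ coneOfPerm σ) :
    x + y ∈ coneOfPerm σ := by
  obtain ⟨c, hc, rfl⟩ := hx
  obtain ⟨c', hc', rfl⟩ := hy
  exact ⟨c + c', fun p => add_nonneg (hc p) (hc' p), by simp only [Pi.add_apply, add_smul,
    sum_add_distrib]⟩

theorem smul_mem_coneOfPerm {t : ℝ} (ht : 0 ≤ t) {x : Fin n → ℝ} (hx : x ∈ coneOfPerm σ) :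
    t • x ∈ coneOfPerm σ := by
  obtain ⟨c, hc, rfl⟩ := hx
  exact ⟨t • c, fun p => mul_nonneg ht (hc p), by simp only [Pi.smul_apply, smul_sum, smul_smul,
    smul_eq_mul]⟩

theorem zero_mem_coneOfPerm : (0 : Fin n → ℝ) ∈ coneOfPerm σ :=
  ⟨0, fun _ => le_rfl, by simp⟩

variable (σ) in
def pointedConeOfPerm : PointedCone ℝ (Fin n → ℝ) where
  carrier := coneOfPerm σ
  add_mem' := add_mem_coneOfPerm
  zero_mem' := zero_mem_coneOfPerm
  smul_mem' c _ := smul_mem_coneOfPerm c.2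

theorem eVec_sub_eVec_mem_coneOfPerm {i j : Fin n} (hij : σ.symm j ≤ σ.symm i) :
    eVec n i - eVec n j ∈ coneOfPerm σ := by
  obtain hij | hij := hij.lt_or_eq
  · refine ⟨Pi.single (i, j) 1, fun p => ?_, ?_⟩
    · rcases eq_or_ne p (i, j) with rfl | hp <;> simp [*]
    · rw [sum_eq_single_of_mem (i, j) (by simpa using hij) fun p _ hp => by simp [hp]]
      simp
  · rw [σ.symm.injective hij, sub_self]
    exact zero_mem_coneOfPerm

theorem sum_eVec_mem_singleton_add_coneOfPerm {d : ℕ} {A A' : Finset (Fin n)} (hA : #A = d)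
    (hA' : #A' = d) (h : ∀ k, A.orderEmbOfFin hA k ≤ A'.orderEmbOfFin hA' k) :
    ∑ a ∈ A', eVec n (σ a) ∈ {∑ a ∈ A, eVec n (σ a)} + coneOfPerm σ := by
  rw [← map_orderEmbOfFin_univ A hA, ← map_orderEmbOfFin_univ A' hA', sum_map, sum_map,
    Set.singleton_add]
  refine ⟨∑ k, (eVec n (σ (A'.orderEmbOfFin hA' k)) - eVec n (σ (A.orderEmbOfFin hA k))),
    (pointedConeOfPerm σ).sum_mem fun k _ => eVec_sub_eVec_mem_coneOfPerm (by simpa using h k),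
    by simp⟩

end Cone

theorem Set.add_eq_singleton_add_of_subset {G : Type*} [AddSemigroup G] {P C : Set G} {b : G}
    (hC : C + C ⊆ C) (hb : b ∈ P) (hP : P ⊆ {b} + C) : P + C = {b} + C :=
  subset_antisymm
    (calc P + C ⊆ {b} + C + C := Set.add_subset_add hP le_rfl
      _ = {b} + (C + C) := add_assoc _ _ _
      _ ⊆ {b} + C := Set.add_subset_add le_rfl hC)
    (Set.add_subset_add (Set.singleton_subset_iff.2 hb) le_rfl)

theorem linearIndepOn_comp_image_symm_iff {α β K V : Type*} [DecidableEq α] [Field K]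
    [AddCommGroup V] [Module K V] {f : β → V} (e : α ≃ β) {B : Finset β} :
    LinearIndepOn K (f ∘ e) (B.image e.symm : Finset α) ↔ LinearIndepOn K f B := by
  rw [linearIndepOn_equiv, coe_image, Equiv.image_symm_image]

theorem isLexMinBasis_image_symm {K : Type*} [Field K] {d n : ℕ} {M : Matrix (Fin d) (Fin n) K}
    {σ : Equiv.Perm (Fin n)} {B : Finset (Fin n)} (hcard : #B = d)
    (hind : LinearIndependent K (fun i : B => M.transpose (i : Fin n)))
    (hleast : ∀ B' : Finset (Fin n), #B' = d →
      LinearIndependent K (fun i : B' => M.transpose (i : Fin n)) → B = B' ∨ lexLtPerm σ B B') :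
    IsLexMinBasis K (M.transpose ∘ σ) (B.image σ.symm) := by
  have hcard_image : ∀ T : Finset (Fin n), ∀ e : Equiv.Perm (Fin n), #(T.image e) = #T :=
    fun T e => card_image_of_injective _ e.injective
  refine ⟨(linearIndepOn_comp_image_symm_iff σ).2 hind, by simp [hcard_image, hcard], ?_⟩
  intro T hT hTcard hTA
  have hT_image : (T.image σ).image σ.symm = T := by simp [image_image]
  rw [Module.finrank_fin_fun] at hTcard
  rcases hleast (T.image σ) (by rw [hcard_image, hTcard])
      ((linearIndepOn_comp_image_symm_iff σ).1 (by rwa [hT_image])) with rfl | hlex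
  · exact (hTA hT_image.symm).elim
  · rw [lexLtPerm, hT_image] at hlex
    exact exists_mem_notMem_of_lex_sort (by simp [hcard_image, hcard, hTcard]) hlex

theorem rankPolytope_add_coneOfPerm_eq_general {K : Type*} [Field K] {d n : ℕ}
    (M : Matrix (Fin d) (Fin n) K)
    (σ : Equiv.Perm (Fin n)) (Bσ : Finset (Fin n)) (hBσcard : Bσ.card = d)
    (hBσind : LinearIndependent K (fun i : Bσ => M.transpose (i : Fin n)))
    (hBσleast : ∀ B' : Finset (Fin n), B'.card = d →
      LinearIndependent K (fun i : B' => M.transpose (i : Fin n)) →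
      Bσ = B' ∨ lexLtPerm σ Bσ B') :
    rankPolytope M + coneOfPerm σ = {∑ i ∈ Bσ, eVec n i} + coneOfPerm σ := by
  have hmin := isLexMinBasis_image_symm hBσcard hBσind hBσleast
  have hsum (B : Finset (Fin n)) : ∑ a ∈ B.image σ.symm, eVec n (σ a) = ∑ i ∈ B, eVec n i := by
    simp [sum_image]
  have hvertex : {x | ∃ B : Finset (Fin n), #B = d ∧
      LinearIndependent K (fun i : B => M.transpose (i : Fin n)) ∧ x = ∑ i ∈ B, eVec n i} ⊆
      {∑ i ∈ Bσ, eVec n i} + coneOfPerm σ := by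
    rintro _ ⟨B, hB, hBind, rfl⟩
    have hB' := (linearIndepOn_comp_image_symm_iff σ).2 hBind
    rw [← hsum, ← hsum]
    exact sum_eVec_mem_singleton_add_coneOfPerm _ _
      (hmin.orderEmbOfFin_le hB' (by simp [card_image_of_injective _ σ.symm.injective, hB]))
  exact Set.add_eq_singleton_add_of_subset (coe_add_coe (pointedConeOfPerm σ)).subset
    (subset_convexHull ℝ _ ⟨Bσ, hBσcard, hBσind, rfl⟩)
    (convexHull_min hvertex ((convex_singleton _).add (pointedConeOfPerm σ).convex))

/-- Gale maximality: if `B(σ)` is the `≺_σ`-lexicographically first column basis of `M`,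
then `P_M + C_σ = e_{B(σ)} + C_σ`. -/
theorem rankPolytope_add_coneOfPerm_eq {K : Type*} [Field K] {d n : ℕ}
    (M : Matrix (Fin d) (Fin n) K) (hM : M.rank = d)
    (σ : Equiv.Perm (Fin n)) (Bσ : Finset (Fin n)) (hBσcard : Bσ.card = d)
    (hBσind : LinearIndependent K (fun i : Bσ => M.transpose (i : Fin n)))
    (hBσleast : ∀ B' : Finset (Fin n), B'.card = d →
      LinearIndependent K (fun i : B' => M.transpose (i : Fin n)) →
      Bσ = B' ∨ lexLtPerm σ Bσ B') :
    rankPolytope M + coneOfPerm σ = {∑ i ∈ Bσ, eVec n i} + coneOfPerm σ :=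
  rankPolytope_add_coneOfPerm_eq_general M σ Bσ hBσcard hBσind hBσleast
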